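/- Let d ∈ (0,1), l ≥ 0, set K = ⌊l+d⌋ + 2, and let F ∈ SR_d^K(0+). Then for every ε > 0 and every −∞ < a < b < ∞, one has lim_{h↓0} sup_{a < v < u < b, u−v ≤ h} (u−v)^{d+ε}/F(u,v) = 0. -/

import Mathlib

open Set Filter MeasureTheory intervalIntegral Polynomial Metric
open scoped Topology

noncomputable section

/-- Mixed partial derivative `F^{(n,m)}`: `n` derivatives in the first (time) variable
and `m` derivatives in the second variable. -/
noncomputable def pderiv2 (n m : ℕ) (F : ℝ → ℝ → ℝ) : ℝ → ℝ → ℝ :=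
  fun s r => iteratedDeriv m (fun r' => iteratedDeriv n (fun s' => F s' r') s) r

/-- The closed half-plane `E = {(s,r) : r ≤ s}`. -/
def Ebar : Set (ℝ × ℝ) := {p | p.2 ≤ p.1}

/-- The open half-plane `Ẽ = {(s,r) : r < s}`. -/
def Etil : Set (ℝ × ℝ) := {p | p.2 < p.1}

/-- Membership in `C₊^{(k)}(E)` : continuous on `E`, `k` times continuously
differentiable on `Ẽ`, and strictly positive on `Ẽ`. -/
structure CPlus (k : ℕ) (F : ℝ → ℝ → ℝ) : Prop where
  cont : ContinuousOn (fun p : ℝ × ℝ => F p.1 p.2) Ebar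
  smooth : ContDiffOn ℝ k (fun p : ℝ × ℝ => F p.1 p.2) Etil
  pos : ∀ p ∈ Etil, 0 < F p.1 p.2

/-- `F` is a function of smooth variation of index `(ρ, k)` at the diagonal,
i.e. `F ∈ SR_ρ^k(0+)`. -/
structure SmoothVariation (ρ : ℝ) (k : ℕ) (F : ℝ → ℝ → ℝ) : Prop where
  mem : CPlus k F
  condA : ∀ K : Set ℝ, IsCompact K → ∀ ε > 0, ∃ h₀ > 0, ∀ h : ℝ, 0 < h → h < h₀ →
    ∀ t ∈ K, |h * pderiv2 0 1 F t (t - h) / F t (t - h) + ρ| < ε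
  condB : ∀ K : Set ℝ, IsCompact K → ∀ ε > 0, ∃ h₀ > 0, ∀ h : ℝ, 0 < h → h < h₀ →
    ∀ t ∈ K, |h * pderiv2 1 0 F (t + h) t / F (t + h) t - ρ| < ε
  condC : ∀ j : ℕ, 2 ≤ j → j ≤ k → ∀ K : Set ℝ, IsCompact K → ∀ ε > 0, ∃ h₀ > 0,
    ∀ h : ℝ, 0 < h → h < h₀ → ∀ t ∈ K,
      |h ^ j * pderiv2 (j - 1) 1 F t (t - h) / F t (t - h)
        + ∏ i ∈ Finset.range j, (ρ - (i : ℝ))| < ε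
  condD : ∀ K : Set ℝ, IsCompact K → ∀ ε > 0, ∃ h₀ > 0, ∀ h : ℝ, 0 < h → h < h₀ →
    ∀ t ∈ K, |h ^ 2 * pderiv2 0 2 F t (t - h) / F t (t - h) - ρ * (ρ - 1)| < ε

/-- The 2-microlocal space with gauge function `F`, `C_F^{d,s'}(t₀)`. -/
def MemCF (F : ℝ → ℝ → ℝ) (d s' t₀ : ℝ) (g : ℝ → ℝ) : Prop :=
  ∃ C > 0, ∃ h > 0, ∃ P : Polynomial ℝ, (P.natDegree : ℤ) ≤ ⌊d - s'⌋ ∧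
    ∀ u v : ℝ, u ∈ Metric.ball t₀ h → v ∈ Metric.ball t₀ h → v ≤ u →
      |(g u - P.eval u) - (g v - P.eval v)| ≤
        C * F u v * (|u - t₀| + |v - t₀|) ^ (-s')

/-- The classical 2-microlocal space `C^{σ,s'}(t₀)`. -/
def MemC2ML (σ s' t₀ : ℝ) (g : ℝ → ℝ) : Prop :=
  ∃ C > 0, ∃ h > 0, ∃ P : Polynomial ℝ, (P.natDegree : ℤ) ≤ ⌊σ - s'⌋ ∧
    ∀ u v : ℝ, u ∈ Metric.ball t₀ h → v ∈ Metric.ball t₀ h →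
      |(g u - P.eval u) - (g v - P.eval v)| ≤
        C * |u - v| ^ σ * (|u - t₀| + |v - t₀|) ^ (-s')

/-- The pointwise Hölder space `C^l(t₀)`. -/
def PtwHolder (l t₀ : ℝ) (g : ℝ → ℝ) : Prop :=
  ∃ C > 0, ∃ h > 0, ∃ P : Polynomial ℝ, (P.natDegree : ℤ) ≤ ⌊l⌋ ∧
    ∀ t ∈ Metric.ball t₀ h, |g t - P.eval t| ≤ C * |t - t₀| ^ l

/-- The pointwise Hölder exponent `h_g(t₀) = sup{l : g ∈ C^l(t₀)}`. -/
def holderExp (g : ℝ → ℝ) (t₀ : ℝ) : ℝ := sSup {l | PtwHolder l t₀ g}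

/-- The Hölder exponent with gauge function `F`,
`h̄^d_g(t₀) = d − inf{s' ≤ 0 : g ∈ C_F^{d,s'}(t₀)}`. -/
def holderGaugeExp (F : ℝ → ℝ → ℝ) (d : ℝ) (g : ℝ → ℝ) (t₀ : ℝ) : ℝ :=
  d - sInf {s' | s' ≤ 0 ∧ MemCF F d s' t₀ g}

/-- The 2-microlocal frontier `σ_{g,t₀}(s') = sup{σ ∈ [0,1) : g ∈ C^{σ,s'}(t₀)}`. -/
def frontier2ML (g : ℝ → ℝ) (t₀ s' : ℝ) : ℝ :=
  sSup {σ | σ ∈ Set.Ico (0:ℝ) 1 ∧ MemC2ML σ s' t₀ g}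

/-- `g` is càdlàg on `[0,∞)`: right-continuous with left limits. -/
def CadlagOn (g : ℝ → ℝ) : Prop :=
  (∀ t : ℝ, 0 ≤ t → Tendsto g (𝓝[Set.Ici t] t) (𝓝 (g t))) ∧
  (∀ t : ℝ, 0 < t → ∃ L : ℝ, Tendsto g (𝓝[Set.Iio t] t) (𝓝 L))

/-!
Condition (a) says that `x ↦ F(u, u - x)` has logarithmic derivative `ρ / x + o(1 / x)` as
`x ↓ 0`, uniformly for `u` in a compact set. Hence `x ↦ F(u, u - x) x^{-(ρ+δ)}` is antitone on a
fixed interval `(0, h₀)`, and comparing with its value at `h₀ / 2`, which is bounded below by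
compactness, gives `F(u, u - h) ≥ B h^{ρ+δ}`. With `ρ = d` and `δ = ε / 2` this yields
`(u - v)^{d+ε} / F(u, v) ≤ (u - v)^{ε/2} / B`.
-/

open Real

lemma hasDerivAt_pderiv2_zero_one {F : ℝ → ℝ → ℝ} {t r : ℝ}
    (hF : DifferentiableAt ℝ (fun p : ℝ × ℝ => F p.1 p.2) (t, r)) :
    HasDerivAt (fun r' => F t r') (pderiv2 0 1 F t r) r := by
  have hline : HasDerivAt (fun r' : ℝ => ((t, r') : ℝ × ℝ)) (0, 1) r :=
    (hasDerivAt_const r t).prodMk (hasDerivAt_id r)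
  have h : HasDerivAt (fun r' => F t r') (deriv (fun r' => F t r') r) r :=
    (hF.hasFDerivAt.comp_hasDerivAt r hline).differentiableAt.hasDerivAt
  simpa [pderiv2] using h

lemma CPlus.differentiableAt {k : ℕ} {F : ℝ → ℝ → ℝ} (hF : CPlus k F) (hk : k ≠ 0)
    {t r : ℝ} (hr : r < t) : DifferentiableAt ℝ (fun p : ℝ × ℝ => F p.1 p.2) (t, r) :=
  (hF.smooth.differentiableOn (by exact_mod_cast hk)).differentiableAt
    ((isOpen_lt continuous_snd continuous_fst).mem_nhds hr)

lemma antitoneOn_mul_rpow_neg {g g' : ℝ → ℝ} {c h₀ : ℝ}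
    (hg : ∀ x ∈ Ioo 0 h₀, HasDerivAt g (g' x) x)
    (hlog : ∀ x ∈ Ioo 0 h₀, x * g' x ≤ c * g x) :
    AntitoneOn (fun x => g x * x ^ (-c)) (Ioo 0 h₀) := by
  have hG : ∀ x ∈ Ioo 0 h₀, HasDerivAt (fun x => g x * x ^ (-c))
      (x ^ (-c - 1) * (x * g' x - c * g x)) x := by
    intro x hx
    refine ((hg x hx).mul (hasDerivAt_rpow_const (p := -c) (Or.inl hx.1.ne'))).congr_deriv ?_
    have hx0 : x ≠ 0 := hx.1.ne'
    rw [rpow_sub_one hx0]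
    field_simp
    ring
  apply antitoneOn_of_hasDerivWithinAt_nonpos (convex_Ioo 0 h₀)
  · exact fun x hx => (hG x hx).continuousAt.continuousWithinAt
  · rw [interior_Ioo]
    exact fun x hx => (hG x hx).hasDerivWithinAt
  · rw [interior_Ioo]
    exact fun x hx => mul_nonpos_of_nonneg_of_nonpos (rpow_nonneg hx.1.le _)
      (sub_nonpos.2 (hlog x hx))

namespace SmoothVariation

variable {ρ : ℝ} {k : ℕ} {F : ℝ → ℝ → ℝ} {S : Set ℝ} {δ : ℝ}

lemma antitoneOn_mul_rpow_neg (hF : SmoothVariation ρ k F) (hk : k ≠ 0) (hS : IsCompact S)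
    (hδ : 0 < δ) :
    ∃ h₀ > 0, ∀ u ∈ S, AntitoneOn (fun x => F u (u - x) * x ^ (-(ρ + δ))) (Ioo 0 h₀) := by
  obtain ⟨h₀, hh₀, hA⟩ := hF.condA S hS δ hδ
  refine ⟨h₀, hh₀, fun u hu =>
    _root_.antitoneOn_mul_rpow_neg (g' := fun x => -pderiv2 0 1 F u (u - x)) ?_ ?_⟩
  · intro x hx
    have h : HasDerivAt (fun x => F u (u - x)) (pderiv2 0 1 F u (u - x) * -1) x :=
      (hasDerivAt_pderiv2_zero_one (hF.mem.differentiableAt hk (sub_lt_self u hx.1))).comp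
        x ((hasDerivAt_id x).const_sub u)
    simpa using h
  · intro x hx
    have hpos : 0 < F u (u - x) := hF.mem.pos (u, u - x) (sub_lt_self u hx.1)
    have hlog : -(ρ + δ) < x * pderiv2 0 1 F u (u - x) / F u (u - x) := by
      linarith [(abs_lt.1 (hA x hx.1 hx.2 u hu)).1]
    rw [lt_div_iff₀ hpos] at hlog
    linarith

lemma exists_mul_rpow_le (hF : SmoothVariation ρ k F) (hk : k ≠ 0) (hS : IsCompact S)
    (hδ : 0 < δ) :
    ∃ h₁ > 0, ∃ B > 0, ∀ u ∈ S, ∀ h ∈ Ioc 0 h₁, B * h ^ (ρ + δ) ≤ F u (u - h) := by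
  obtain ⟨h₀, hh₀, hanti⟩ := hF.antitoneOn_mul_rpow_neg hk hS hδ
  have hh₁ : 0 < h₀ / 2 := half_pos hh₀
  have hcont : ContinuousOn (fun t => F t (t - h₀ / 2)) S :=
    hF.mem.cont.comp (continuous_id.prodMk (continuous_id.sub continuous_const)).continuousOn
      fun t _ => show t - h₀ / 2 ≤ t by linarith
  obtain ⟨m, hm, hmin⟩ := hS.exists_forall_le' hcont
    fun t _ => hF.mem.pos (t, t - h₀ / 2) (sub_lt_self t hh₁)
  refine ⟨h₀ / 2, hh₁, m * (h₀ / 2) ^ (-(ρ + δ)), by positivity, fun u hu h hh => ?_⟩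
  have key : m * (h₀ / 2) ^ (-(ρ + δ)) ≤ F u (u - h) * h ^ (-(ρ + δ)) :=
    calc m * (h₀ / 2) ^ (-(ρ + δ)) ≤ F u (u - h₀ / 2) * (h₀ / 2) ^ (-(ρ + δ)) :=
          mul_le_mul_of_nonneg_right (hmin u hu) (rpow_nonneg hh₁.le _)
      _ ≤ F u (u - h) * h ^ (-(ρ + δ)) :=
          hanti u hu ⟨hh.1, by linarith [hh.2]⟩ ⟨hh₁, half_lt_self hh₀⟩ hh.2
  rwa [rpow_neg hh.1.le, ← div_eq_mul_inv, le_div_iff₀ (rpow_pos_of_pos hh.1 _)] at key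

end SmoothVariation

theorem smoothVariation_reciprocal_vanish_general
    (d l : ℝ)
    (K : ℕ) (hK : K = (⌊l + d⌋).toNat + 2)
    (F : ℝ → ℝ → ℝ) (hF : SmoothVariation d K F)
    (ε : ℝ) (hε : 0 < ε) (a b : ℝ) :
    ∀ η > 0, ∃ h₀ > 0, ∀ u v : ℝ, a < v → v < u → u < b → u - v ≤ h₀ →
      |(u - v) ^ (d + ε) / F u v| < η := by
  intro η hη
  obtain ⟨h₁, hh₁, B, hB, hlow⟩ :=
    hF.exists_mul_rpow_le (by omega) (isCompact_Icc (a := a) (b := b)) (half_pos hε)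
  refine ⟨min h₁ ((η * B) ^ (2 / ε) / 2), by positivity, fun u v hav hvu hub huv => ?_⟩
  have hh : 0 < u - v := sub_pos.2 hvu
  have hFuv : B * (u - v) ^ (d + ε / 2) ≤ F u v := by
    simpa using hlow u ⟨by linarith, hub.le⟩ (u - v) ⟨hh, huv.trans (min_le_left _ _)⟩
  have hsmall : (u - v) ^ (ε / 2) < η * B :=
    calc (u - v) ^ (ε / 2) < ((η * B) ^ (2 / ε)) ^ (ε / 2) := by
          refine rpow_lt_rpow hh.le ?_ (half_pos hε)
          linarith [min_le_right h₁ ((η * B) ^ (2 / ε) / 2),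
            rpow_pos_of_pos (mul_pos hη hB) (2 / ε)]
      _ = η * B := by
          rw [← rpow_mul (mul_pos hη hB).le, div_mul_div_comm, mul_comm 2 ε,
            div_self (by positivity), rpow_one]
  have hFpos : 0 < F u v := (mul_pos hB (rpow_pos_of_pos hh _)).trans_le hFuv
  rw [abs_of_pos (div_pos (rpow_pos_of_pos hh _) hFpos)]
  calc (u - v) ^ (d + ε) / F u v ≤ (u - v) ^ (d + ε) / (B * (u - v) ^ (d + ε / 2)) :=
        div_le_div_of_nonneg_left (rpow_nonneg hh.le _) (by positivity) hFuv
    _ = (u - v) ^ (ε / 2) / B := by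
        rw [show d + ε = d + ε / 2 + ε / 2 by ring, rpow_add hh]
        field_simp
    _ < η := (div_lt_iff₀ hB).2 hsmall

/-- Lemma 2.2(b): for `F ∈ SR_d^{⌊l+d⌋+2}(0+)`, every `ε > 0` and `a < b`,
`lim_{h↓0} sup_{a<v<u<b, u−v≤h} (u−v)^{d+ε}/F(u,v) = 0`. -/
theorem smoothVariation_reciprocal_vanish
    (d l : ℝ) (hd : d ∈ Set.Ioo (0:ℝ) 1) (hl : 0 ≤ l)
    (K : ℕ) (hK : K = (⌊l + d⌋).toNat + 2)
    (F : ℝ → ℝ → ℝ) (hF : SmoothVariation d K F)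
    (ε : ℝ) (hε : 0 < ε) (a b : ℝ) (hab : a < b) :
    ∀ η > 0, ∃ h₀ > 0, ∀ u v : ℝ, a < v → v < u → u < b → u - v ≤ h₀ →
      |(u - v) ^ (d + ε) / F u v| < η :=
  smoothVariation_reciprocal_vanish_general d l K hK F hF ε hε a b
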